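/- arXiv:1808.00087 — 9 statements merged into one kernel-verified Lean document; each statement's English description precedes it below -/
import Mathlib

section
/- Let p and q be probability measures on a measurable space with p absolutely continuous with respect to q, let γ ∈ (0,1), and let α ≥ 2 be an integer such that ∫ (dp/dq)^j dq < ∞ for every integer 2 ≤ j ≤ α. Then ∫ ( d((1−γ)q + γp)/dq )^α dq = (1−γ)^α · ( 1 + α·γ/(1−γ) + Σ_{j=2}^{α} C(α,j)·(γ/(1−γ))^j · ∫ (dp/dq)^j dq ). Consequently, D_α((1−γ)q + γp ‖ q) = (α/(α−1))·log(1−γ) + (1/(α−1))·log( 1 + α·γ/(1−γ) + Σ_{j=2}^{α} C(α,j)·(γ/(1−γ))^j · e^{(j−1)·D_j(p‖q)} ). -/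
/-!
The density of `(1 - γ) q + γ p` with respect to `q` is `(1 - γ) (1 + r f)`, where `f = dp/dq` and
`r = γ / (1 - γ)`. Expanding `(1 + r f) ^ α` by the binomial theorem and integrating term by term
gives a combination of the moments `∫ f ^ j dq`, of which the zeroth and first equal `1` because
`p` and `q` are probability measures. Since `∫ f ^ j dq = exp ((j - 1) D_j(p‖q))`, taking logarithms
gives the Rényi divergence.
-/

open MeasureTheory ProbabilityTheory ENNReal Real

/-- Rényi divergence of order `a`:
`D_a(p‖q) = (a-1)⁻¹ · log ∫ (dp/dq)^a dq`, valued in the extended reals. -/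
noncomputable def renyiDiv {Θ : Type*} [MeasurableSpace Θ]
    (p q : Measure Θ) (a : ℝ) : EReal :=
  (((a - 1)⁻¹ : ℝ) : EReal) * ENNReal.log (∫⁻ θ, p.rnDeriv q θ ^ a ∂q)

open scoped NNReal

theorem Finset.sum_range_succ_choose_mul_eq {R : Type*} [Semiring R] (n : ℕ) (g : ℕ → R) :
    ∑ k ∈ Finset.range (n + 1), (n.choose k : R) * g k =
      g 0 + n * g 1 + ∑ k ∈ Finset.Icc 2 n, (n.choose k : R) * g k := by
  rcases Nat.eq_zero_or_pos n with rfl | hn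
  · simp
  have hsplit : Finset.range (n + 1) = insert 0 (insert 1 (Finset.Icc 2 n)) := by
    ext k; simp only [Finset.mem_range, Finset.mem_insert, Finset.mem_Icc]; omega
  rw [hsplit, Finset.sum_insert (by simp), Finset.sum_insert (by simp)]
  simp [add_assoc]

theorem ENNReal.ofReal_sum_natCast_mul_mul_toReal {ι : Type*} (s : Finset ι) (c : ι → ℕ)
    {w : ι → ℝ} (hw : ∀ i ∈ s, 0 ≤ w i) {M : ι → ℝ≥0∞} (hM : ∀ i ∈ s, M i ≠ ∞) :
    ENNReal.ofReal (∑ i ∈ s, (c i : ℝ) * w i * (M i).toReal) =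
      ∑ i ∈ s, (c i : ℝ≥0∞) * ENNReal.ofReal (w i) * M i := by
  rw [ENNReal.ofReal_sum_of_nonneg fun i hi ↦ by have := hw i hi; positivity]
  refine Finset.sum_congr rfl fun i hi ↦ ?_
  rw [ENNReal.ofReal_mul (by have := hw i hi; positivity),
    ENNReal.ofReal_mul (Nat.cast_nonneg _), ENNReal.ofReal_natCast, ENNReal.ofReal_toReal (hM i hi)]

namespace MeasureTheory

variable {Ω : Type*} [MeasurableSpace Ω]

theorem Measure.rnDeriv_smul_add_smul_self (μ ν : Measure Ω) [SigmaFinite μ] [SigmaFinite ν]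
    {c d : ℝ≥0∞} (hc : c ≠ ∞) (hd : d ≠ ∞) :
    (c • ν + d • μ).rnDeriv ν =ᵐ[ν] fun x ↦ c + d * μ.rnDeriv ν x := by
  have : SigmaFinite (c • ν) := by lift c to ℝ≥0 using hc; exact SMul.sigmaFinite c
  have : SigmaFinite (d • μ) := by lift d to ℝ≥0 using hd; exact SMul.sigmaFinite d
  filter_upwards [Measure.rnDeriv_add' (c • ν) (d • μ) ν,
    Measure.rnDeriv_smul_left_of_ne_top' ν ν hc, Measure.rnDeriv_smul_left_of_ne_top' μ ν hd,
    Measure.rnDeriv_self ν] with x h_add h_c h_d h_self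
  simp [h_add, h_c, h_d, h_self]

theorem lintegral_one_add_mul_pow (μ : Measure Ω) {f : Ω → ℝ≥0∞} (hf : AEMeasurable f μ)
    (c : ℝ≥0∞) (n : ℕ) :
    ∫⁻ x, (1 + c * f x) ^ n ∂μ =
      ∑ k ∈ Finset.range (n + 1), (n.choose k : ℝ≥0∞) * (c ^ k * ∫⁻ x, f x ^ k ∂μ) := by
  have h_binom (x : Ω) : (1 + c * f x) ^ n =
      ∑ k ∈ Finset.range (n + 1), (n.choose k : ℝ≥0∞) * c ^ k * f x ^ k := by
    rw [add_comm, add_pow]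
    exact Finset.sum_congr rfl fun k _ ↦ by ring
  simp_rw [h_binom]
  rw [lintegral_finsetSum' _ fun k _ ↦ (hf.pow_const k).const_mul _]
  exact Finset.sum_congr rfl fun k _ ↦ by
    rw [lintegral_const_mul'' _ (hf.pow_const k), mul_assoc]

theorem lintegral_rnDeriv_smul_add_smul_pow_eq (p q : Measure Ω) [IsProbabilityMeasure p]
    [IsProbabilityMeasure q] (hpq : p ≪ q) {a c : ℝ≥0∞} (ha : a ≠ ∞) (hc : c ≠ ∞) (n : ℕ) :
    ∫⁻ x, (a • q + (a * c) • p).rnDeriv q x ^ n ∂q =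
      a ^ n * (1 + n * c + ∑ k ∈ Finset.Icc 2 n,
        (n.choose k : ℝ≥0∞) * c ^ k * ∫⁻ x, p.rnDeriv q x ^ k ∂q) := by
  have h_density : (a • q + (a * c) • p).rnDeriv q =ᵐ[q] fun x ↦ a * (1 + c * p.rnDeriv q x) := by
    filter_upwards [p.rnDeriv_smul_add_smul_self q ha (mul_ne_top ha hc)] with x hx
    rw [hx, mul_add, mul_one, mul_assoc]
  have h_mass : ∫⁻ x, p.rnDeriv q x ^ 1 ∂q = 1 := by
    simp [Measure.lintegral_rnDeriv hpq]
  rw [lintegral_congr_ae (h_density.mono fun x hx ↦ by rw [hx, mul_pow]),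
    lintegral_const_mul' _ _ (pow_ne_top ha),
    lintegral_one_add_mul_pow q (p.measurable_rnDeriv q).aemeasurable,
    Finset.sum_range_succ_choose_mul_eq, h_mass]
  simp [mul_assoc]

theorem lintegral_rnDeriv_one_sub_smul_add_smul_pow_eq (p q : Measure Ω) [IsProbabilityMeasure p]
    [IsProbabilityMeasure q] (hpq : p ≪ q) {γ : ℝ} (hγ0 : 0 < γ) (hγ1 : γ < 1) (n : ℕ) :
    ∫⁻ x, (ENNReal.ofReal (1 - γ) • q + ENNReal.ofReal γ • p).rnDeriv q x ^ (n : ℝ) ∂q =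
      ENNReal.ofReal ((1 - γ) ^ n) * (1 + ENNReal.ofReal ((n : ℝ) * γ / (1 - γ)) +
        ∑ j ∈ Finset.Icc 2 n, (n.choose j : ℝ≥0∞) * ENNReal.ofReal ((γ / (1 - γ)) ^ j) *
          ∫⁻ x, p.rnDeriv q x ^ (j : ℝ) ∂q) := by
  have h1γ : 0 < 1 - γ := sub_pos.2 hγ1
  have h_weight : ENNReal.ofReal γ = ENNReal.ofReal (1 - γ) * ENNReal.ofReal (γ / (1 - γ)) := by
    rw [← ENNReal.ofReal_mul h1γ.le, mul_div_cancel₀ _ h1γ.ne']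
  simp only [ENNReal.rpow_natCast]
  rw [h_weight, lintegral_rnDeriv_smul_add_smul_pow_eq p q hpq ofReal_ne_top ofReal_ne_top,
    ENNReal.ofReal_pow h1γ.le, mul_div_assoc, ENNReal.ofReal_mul (Nat.cast_nonneg _),
    ENNReal.ofReal_natCast]
  simp only [ENNReal.ofReal_pow (div_nonneg hγ0.le h1γ.le)]

end MeasureTheory

section Renyi

variable {Ω : Type*} [MeasurableSpace Ω]

theorem exp_mul_renyiDiv (p q : Measure Ω) {a : ℝ} (ha : a ≠ 1) :
    EReal.exp (((a - 1 : ℝ) : EReal) * renyiDiv p q a) = ∫⁻ x, p.rnDeriv q x ^ a ∂q := by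
  rw [renyiDiv, ← mul_assoc, ← EReal.coe_mul, mul_inv_cancel₀ (sub_ne_zero.2 ha),
    EReal.coe_one, one_mul, ENNReal.exp_log]

theorem renyiDiv_eq_of_lintegral_eq_ofReal (p q : Measure Ω) {a x : ℝ}
    (h : ∫⁻ θ, p.rnDeriv q θ ^ a ∂q = ENNReal.ofReal x) (hx : 0 < x) :
    renyiDiv p q a = (((a - 1)⁻¹ * Real.log x : ℝ) : EReal) := by
  rw [renyiDiv, h, ENNReal.log_ofReal_of_pos hx, EReal.coe_mul]

end Renyi

theorem lintegral_rnDeriv_mixture_pow_eq_general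
    {Θ : Type*} [MeasurableSpace Θ]
    (p q : Measure Θ) [IsProbabilityMeasure p] [IsProbabilityMeasure q]
    (hpq : p ≪ q) (γ : ℝ) (hγ0 : 0 < γ) (hγ1 : γ < 1)
    (α : ℕ)
    (hfin : ∀ j : ℕ, 2 ≤ j → j ≤ α → ∫⁻ θ, p.rnDeriv q θ ^ (j : ℝ) ∂q < ∞) :
    (∫⁻ θ, (ENNReal.ofReal (1 - γ) • q + ENNReal.ofReal γ • p).rnDeriv q θ ^ (α : ℝ) ∂q =
      ENNReal.ofReal ((1 - γ) ^ α) *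
        (1 + ENNReal.ofReal ((α : ℝ) * γ / (1 - γ)) +
          ∑ j ∈ Finset.Icc 2 α, (α.choose j : ℝ≥0∞) * ENNReal.ofReal ((γ / (1 - γ)) ^ j) *
            ∫⁻ θ, p.rnDeriv q θ ^ (j : ℝ) ∂q)) ∧
    renyiDiv (ENNReal.ofReal (1 - γ) • q + ENNReal.ofReal γ • p) q (α : ℝ) =
      (↑((α : ℝ) / ((α : ℝ) - 1) * Real.log (1 - γ) +
        ((α : ℝ) - 1)⁻¹ * Real.log (1 + (α : ℝ) * γ / (1 - γ) +
          ∑ j ∈ Finset.Icc 2 α, (α.choose j : ℝ) * (γ / (1 - γ)) ^ j *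
            (EReal.exp (((((j : ℝ) - 1) : ℝ) : EReal) * renyiDiv p q (j : ℝ))).toReal)) :
        EReal) := by
  have h1γ : 0 < 1 - γ := sub_pos.2 hγ1
  have h_moment := lintegral_rnDeriv_one_sub_smul_add_smul_pow_eq p q hpq hγ0 hγ1 α
  refine ⟨h_moment, ?_⟩
  have h_exp (j : ℕ) (hj : j ∈ Finset.Icc 2 α) :
      (EReal.exp (((((j : ℝ) - 1) : ℝ) : EReal) * renyiDiv p q (j : ℝ))).toReal =
        (∫⁻ θ, p.rnDeriv q θ ^ (j : ℝ) ∂q).toReal := by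
    rw [exp_mul_renyiDiv _ _ (by exact_mod_cast (by grind : j ≠ 1))]
  rw [Finset.sum_congr rfl fun j hj ↦ congrArg _ (h_exp j hj)]
  set T : ℝ := 1 + (α : ℝ) * γ / (1 - γ) + ∑ j ∈ Finset.Icc 2 α, (α.choose j : ℝ) *
    (γ / (1 - γ)) ^ j * (∫⁻ θ, p.rnDeriv q θ ^ (j : ℝ) ∂q).toReal
  have hT_pos : 0 < T := by positivity
  have hT : ∫⁻ θ, (ENNReal.ofReal (1 - γ) • q + ENNReal.ofReal γ • p).rnDeriv q θ
      ^ (α : ℝ) ∂q = ENNReal.ofReal ((1 - γ) ^ α * T) := by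
    rw [h_moment, ENNReal.ofReal_mul (pow_nonneg h1γ.le _), ENNReal.ofReal_add (by positivity)
      (by positivity), ENNReal.ofReal_add zero_le_one (by positivity), ENNReal.ofReal_one,
      ENNReal.ofReal_sum_natCast_mul_mul_toReal _ _ (fun j _ ↦ by positivity)
        fun j hj ↦ (hfin j (Finset.mem_Icc.1 hj).1 (Finset.mem_Icc.1 hj).2).ne]
  rw [renyiDiv_eq_of_lintegral_eq_ofReal _ _ hT (mul_pos (pow_pos h1γ _) hT_pos),
    Real.log_mul (pow_pos h1γ _).ne' hT_pos.ne', Real.log_pow]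
  congr 1
  ring

/-- **Lower bound computation (Proposition 2)**: exact binomial expansion of the moment
`∫ (d((1−γ)q+γp)/dq)^α dq` of a mixture with respect to its base measure, and the resulting
exact expression for the Rényi divergence `D_α((1−γ)q + γp ‖ q)`. -/
theorem lintegral_rnDeriv_mixture_pow_eq
    {Θ : Type*} [MeasurableSpace Θ]
    (p q : Measure Θ) [IsProbabilityMeasure p] [IsProbabilityMeasure q]
    (hpq : p ≪ q) (γ : ℝ) (hγ0 : 0 < γ) (hγ1 : γ < 1)
    (α : ℕ) (hα : 2 ≤ α)
    (hfin : ∀ j : ℕ, 2 ≤ j → j ≤ α → ∫⁻ θ, p.rnDeriv q θ ^ (j : ℝ) ∂q < ∞) :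
    (∫⁻ θ, (ENNReal.ofReal (1 - γ) • q + ENNReal.ofReal γ • p).rnDeriv q θ ^ (α : ℝ) ∂q =
      ENNReal.ofReal ((1 - γ) ^ α) *
        (1 + ENNReal.ofReal ((α : ℝ) * γ / (1 - γ)) +
          ∑ j ∈ Finset.Icc 2 α, (α.choose j : ℝ≥0∞) * ENNReal.ofReal ((γ / (1 - γ)) ^ j) *
            ∫⁻ θ, p.rnDeriv q θ ^ (j : ℝ) ∂q)) ∧
    renyiDiv (ENNReal.ofReal (1 - γ) • q + ENNReal.ofReal γ • p) q (α : ℝ) =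
      (↑((α : ℝ) / ((α : ℝ) - 1) * Real.log (1 - γ) +
        ((α : ℝ) - 1)⁻¹ * Real.log (1 + (α : ℝ) * γ / (1 - γ) +
          ∑ j ∈ Finset.Icc 2 α, (α.choose j : ℝ) * (γ / (1 - γ)) ^ j *
            (EReal.exp (((((j : ℝ) - 1) : ℝ) : EReal) * renyiDiv p q (j : ℝ))).toReal)) :
        EReal) :=
  lintegral_rnDeriv_mixture_pow_eq_general p q hpq γ hγ0 hγ1 α hfin
end

section
/- Let p and q be probability measures on a measurable space with p absolutely continuous with respect to q, and define K(λ) = log ∫ (dp/dq)^{λ+1} dq for λ ≥ 0. Then for every real λ ≥ 0 such that K(⌈λ⌉) is finite, K(λ) ≤ (1 − λ + ⌊λ⌋)·K(⌊λ⌋) + (λ − ⌊λ⌋)·K(⌈λ⌉), where ⌊·⌋ and ⌈·⌉ denote the floor and ceiling functions. -/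
open MeasureTheory ENNReal

/-! By Hölder's inequality with exponents `1/s` and `1/t`, the map `a ↦ log ∫ f ^ a` is convex on
`[0, ∞)`. Writing `λ + 1 = (1 - t) (⌊λ⌋ + 1) + t (⌈λ⌉ + 1)` with `t = λ - ⌊λ⌋` (this holds both when
`λ` is an integer, where `t = 0`, and otherwise, where `⌈λ⌉ = ⌊λ⌋ + 1`) gives the bound. -/

namespace MeasureTheory

variable {α : Type*} [MeasurableSpace α] {μ : Measure α} {f : α → ℝ≥0∞}

theorem lintegral_rpow_convexCombination_le (hf : AEMeasurable f μ) {a b s t : ℝ}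
    (ha : 0 ≤ a) (hb : 0 ≤ b) (hs : 0 ≤ s) (ht : 0 ≤ t) (hst : s + t = 1) :
    ∫⁻ x, f x ^ (s * a + t * b) ∂μ ≤ (∫⁻ x, f x ^ a ∂μ) ^ s * (∫⁻ x, f x ^ b ∂μ) ^ t := by
  have hsplit : ∀ x, f x ^ (s * a + t * b) = (f x ^ a) ^ s * (f x ^ b) ^ t := fun x => by
    rw [← ENNReal.rpow_mul, ← ENNReal.rpow_mul, mul_comm a, mul_comm b,
      ENNReal.rpow_add_of_nonneg _ _ (mul_nonneg hs ha) (mul_nonneg ht hb)]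
  simp_rw [hsplit]
  exact ENNReal.lintegral_mul_norm_pow_le (hf.pow_const a) (hf.pow_const b) hs ht hst

theorem log_lintegral_rpow_convexCombination_le (hf : AEMeasurable f μ) {a b s t : ℝ}
    (ha : 0 ≤ a) (hb : 0 ≤ b) (hs : 0 ≤ s) (ht : 0 ≤ t) (hst : s + t = 1) :
    ENNReal.log (∫⁻ x, f x ^ (s * a + t * b) ∂μ) ≤
      (s : EReal) * ENNReal.log (∫⁻ x, f x ^ a ∂μ) + (t : EReal) * ENNReal.log (∫⁻ x, f x ^ b ∂μ) := by
  rw [← ENNReal.log_rpow, ← ENNReal.log_rpow, ← ENNReal.log_mul_add]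
  exact ENNReal.log_monotone (lintegral_rpow_convexCombination_le hf ha hb hs ht hst)

end MeasureTheory

theorem Int.fract_mul_ceil_sub_floor {R : Type*} [Ring R] [LinearOrder R] [FloorRing R]
    [IsOrderedRing R] (x : R) : Int.fract x * (⌈x⌉ - ⌊x⌋) = Int.fract x := by
  rcases Int.fract_eq_zero_or_add_one_sub_ceil x with h | h
  · rw [h, zero_mul]
  · have hgap : (⌈x⌉ : R) - ⌊x⌋ = 1 := by
      rw [← Int.self_sub_floor] at h
      grind
    rw [hgap, mul_one]

theorem cgf_le_interpolation_general
    {Θ : Type*} [MeasurableSpace Θ]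
    (p q : Measure Θ)
    (K : ℝ → EReal)
    (hK : ∀ lam : ℝ, K lam = ENNReal.log (∫⁻ θ, p.rnDeriv q θ ^ (lam + 1) ∂q))
    (lam : ℝ) (hlam : 0 ≤ lam) :
    K lam ≤ (↑(1 - lam + ((⌊lam⌋ : ℤ) : ℝ)) : EReal) * K (((⌊lam⌋ : ℤ) : ℝ)) +
      (↑(lam - ((⌊lam⌋ : ℤ) : ℝ)) : EReal) * K (((⌈lam⌉ : ℤ) : ℝ)) := by
  have hfloor : (0 : ℝ) ≤ ⌊lam⌋ := by exact_mod_cast Int.floor_nonneg.mpr hlam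
  have hceil : (0 : ℝ) ≤ ⌈lam⌉ := by exact_mod_cast Int.ceil_nonneg hlam
  have hfract := Int.fract_mul_ceil_sub_floor lam
  rw [Int.fract] at hfract
  have hexp : lam + 1 = (1 - lam + ⌊lam⌋) * (⌊lam⌋ + 1) + (lam - ⌊lam⌋) * (⌈lam⌉ + 1) := by
    linear_combination -hfract
  rw [hK, hK, hK, hexp]
  exact log_lintegral_rpow_convexCombination_le (Measure.measurable_rnDeriv p q).aemeasurable
    (by linarith) (by linarith) (by linarith [Int.lt_floor_add_one lam])
    (by linarith [Int.floor_le lam]) (by ring)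

/-- **Piecewise-linear interpolation bound for the CGF (Corollary 1)**: the cumulant
generating function `K(λ) = log ∫ (dp/dq)^{λ+1} dq` of the privacy loss random variable
lies below the linear interpolation of its values at `⌊λ⌋` and `⌈λ⌉`. -/
theorem cgf_le_interpolation
    {Θ : Type*} [MeasurableSpace Θ]
    (p q : Measure Θ) [IsProbabilityMeasure p] [IsProbabilityMeasure q] (hpq : p ≪ q)
    (K : ℝ → EReal)
    (hK : ∀ lam : ℝ, K lam = ENNReal.log (∫⁻ θ, p.rnDeriv q θ ^ (lam + 1) ∂q))
    (lam : ℝ) (hlam : 0 ≤ lam)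
    (hfin : ⊥ < K ((⌈lam⌉ : ℤ) : ℝ) ∧ K ((⌈lam⌉ : ℤ) : ℝ) < ⊤) :
    K lam ≤ (↑(1 - lam + ((⌊lam⌋ : ℤ) : ℝ)) : EReal) * K (((⌊lam⌋ : ℤ) : ℝ)) +
      (↑(lam - ((⌊lam⌋ : ℤ) : ℝ)) : EReal) * K (((⌈lam⌉ : ℤ) : ℝ)) :=
  cgf_le_interpolation_general p q K hK lam hlam
end

section
/- For every real number j > 1, the bivariate function f(x,y) = x^j / y^{j−1} is jointly convex on the open positive quadrant {(x,y) ∈ ℝ² : x > 0, y > 0}. -/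
open Real

/-! The function is `y · (x / y)^j`, the perspective of the convex function `t ↦ t^j`, and the
perspective of a convex function is jointly convex: with `Y = a y₁ + b y₂`, the quotient
`(a x₁ + b x₂) / Y` is the convex combination of `x₁ / y₁` and `x₂ / y₂` with weights
`a y₁ / Y` and `b y₂ / Y`. -/

section Perspective

variable {𝕜 E : Type*} [Field 𝕜] [AddCommGroup E] [Module 𝕜 E]

def perspective (g : E → 𝕜) (p : E × 𝕜) : 𝕜 := p.2 * g (p.2⁻¹ • p.1)

lemma inv_smul_add_eq_add_smul_inv_smul {x₁ x₂ : E} {y₁ y₂ a b : 𝕜}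
    (hy₁ : y₁ ≠ 0) (hy₂ : y₂ ≠ 0) (hY : a * y₁ + b * y₂ ≠ 0) :
    (a * y₁ + b * y₂)⁻¹ • (a • x₁ + b • x₂) =
      (a * y₁ / (a * y₁ + b * y₂)) • (y₁⁻¹ • x₁) +
        (b * y₂ / (a * y₁ + b * y₂)) • (y₂⁻¹ • x₂) := by
  simp only [smul_smul, smul_add]
  congr 2 <;> field_simp

variable [LinearOrder 𝕜] [IsStrictOrderedRing 𝕜]

def perspectiveDomain (s : Set E) : Set (E × 𝕜) := {p | 0 < p.2 ∧ p.2⁻¹ • p.1 ∈ s}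

lemma convex_perspectiveDomain {s : Set E} (hs : Convex 𝕜 s) :
    Convex 𝕜 (perspectiveDomain s : Set (E × 𝕜)) := by
  rintro ⟨x₁, y₁⟩ ⟨hy₁, hx₁⟩ ⟨x₂, y₂⟩ ⟨hy₂, hx₂⟩ a b ha hb hab
  have hY : 0 < a * y₁ + b * y₂ := convex_Ioi 0 hy₁ hy₂ ha hb hab
  refine ⟨hY, ?_⟩
  simp only [Prod.smul_mk, Prod.mk_add_mk, smul_eq_mul]
  rw [inv_smul_add_eq_add_smul_inv_smul hy₁.ne' hy₂.ne' hY.ne']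
  exact hs hx₁ hx₂ (by positivity) (by positivity) (by field_simp)

theorem ConvexOn.perspective {s : Set E} {g : E → 𝕜} (hg : ConvexOn 𝕜 s g) :
    ConvexOn 𝕜 (perspectiveDomain s) (perspective g) := by
  refine ⟨convex_perspectiveDomain hg.1, ?_⟩
  rintro ⟨x₁, y₁⟩ ⟨hy₁, hx₁⟩ ⟨x₂, y₂⟩ ⟨hy₂, hx₂⟩ a b ha hb hab
  have hY : 0 < a * y₁ + b * y₂ := convex_Ioi 0 hy₁ hy₂ ha hb hab
  simp only [_root_.perspective, Prod.smul_mk, Prod.mk_add_mk, smul_eq_mul]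
  rw [inv_smul_add_eq_add_smul_inv_smul hy₁.ne' hy₂.ne' hY.ne']
  refine (mul_le_mul_of_nonneg_left
    (hg.2 hx₁ hx₂ (by positivity) (by positivity) (by field_simp)) hY.le).trans_eq ?_
  simp only [smul_eq_mul]
  field_simp

end Perspective

lemma rpow_div_rpow_sub_one_eq_mul_rpow {x y : ℝ} (j : ℝ) (hx : 0 ≤ x) (hy : 0 < y) :
    x ^ j / y ^ (j - 1) = y * (y⁻¹ * x) ^ j := by
  rw [Real.mul_rpow (inv_nonneg.2 hy.le) hx, Real.inv_rpow hy.le, Real.rpow_sub hy, Real.rpow_one]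
  field_simp

/-- **Joint convexity of `(x,y) ↦ x^j / y^{j−1}` (Lemma 7)**: for every real `j > 1`,
the function is jointly convex on the open positive quadrant. -/
theorem convexOn_pow_div_pow (j : ℝ) (hj : 1 < j) :
    ConvexOn ℝ {pt : ℝ × ℝ | 0 < pt.1 ∧ 0 < pt.2}
      (fun pt : ℝ × ℝ => pt.1 ^ j / pt.2 ^ (j - 1)) := by
  have hquadrant : Convex ℝ {pt : ℝ × ℝ | 0 < pt.1 ∧ 0 < pt.2} :=
    (convex_Ioi 0).prod (convex_Ioi 0)
  refine ((convexOn_rpow hj.le).perspective.subset ?_ hquadrant).congr ?_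
  · rintro ⟨x, y⟩ ⟨hx, hy⟩
    exact ⟨hy, Set.mem_Ici.2 (by positivity)⟩
  · rintro ⟨x, y⟩ ⟨hx, hy⟩
    exact (rpow_div_rpow_sub_one_eq_mul_rpow j hx.le hy).symm
end

section
/- Let μ be a σ-finite measure on a measurable space Θ, let I be a finite index set with weights w_i ≥ 0 summing to 1, and for each i ∈ I let p_i, q_i, r_i : Θ → [0,∞) be measurable functions with r_i(θ) > 0 for μ-almost every θ. Then for every integer j ≥ 1: ∫ | Σ_{i∈I} w_i·(p_i(θ) − q_i(θ)) |^j / ( Σ_{i∈I} w_i·r_i(θ) )^{j−1} dμ(θ) ≤ Σ_{i∈I} w_i · ∫ |p_i(θ) − q_i(θ)|^j / r_i(θ)^{j−1} dμ(θ), with integrals taken in the extended nonnegative reals. -/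
/-!
Pointwise, substituting `u i = w i * r i θ` and `z i = (p i θ - q i θ) / r i θ` turns the integrand
inequality into the weighted power-mean inequality `|∑ u z| ^ j ≤ (∑ u) ^ (j - 1) * ∑ u |z| ^ j`,
which is Jensen's inequality for `|·| ^ j` with the normalized weights `u i / ∑ u`. Integrating
and using linearity of the lower Lebesgue integral gives the mixture bound.
-/

open MeasureTheory ENNReal Finset

lemma abs_sum_mul_pow_succ_le {ι : Type*} {s : Finset ι} {u : ι → ℝ} (hu : ∀ i ∈ s, 0 ≤ u i)
    (z : ι → ℝ) (n : ℕ) :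
    |∑ i ∈ s, u i * z i| ^ (n + 1) ≤ (∑ i ∈ s, u i) ^ n * ∑ i ∈ s, u i * |z i| ^ (n + 1) := by
  set S := ∑ i ∈ s, u i
  set T := ∑ i ∈ s, u i * |z i|
  rcases (sum_nonneg hu).eq_or_lt with hS | hS
  · have hu0 : ∀ i ∈ s, u i = 0 := (sum_eq_zero_iff_of_nonneg hu).1 hS.symm
    rw [sum_eq_zero fun i hi => by simp [hu0 i hi], abs_zero, zero_pow n.succ_ne_zero]
    exact mul_nonneg (pow_nonneg (sum_nonneg hu) _)
      (sum_nonneg fun i hi => mul_nonneg (hu i hi) (by positivity))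
  have hmean : |∑ i ∈ s, u i * z i| ^ (n + 1) ≤ T ^ (n + 1) := by
    refine pow_le_pow_left₀ (abs_nonneg _) ((abs_sum_le_sum_abs _ _).trans_eq ?_) _
    exact sum_congr rfl fun i hi => by rw [abs_mul, abs_of_nonneg (hu i hi)]
  have hJ := Real.pow_arith_mean_le_arith_mean_pow s (fun i => u i / S) (fun i => |z i|)
    (fun i hi => div_nonneg (hu i hi) hS.le) (by rw [← sum_div, div_self hS.ne'])
    (fun i _ => abs_nonneg _) (n + 1)
  simp only [div_mul_eq_mul_div, ← sum_div, div_pow] at hJ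
  rw [div_le_div_iff₀ (by positivity) hS, pow_succ S, ← mul_assoc] at hJ
  exact hmean.trans ((le_of_mul_le_mul_right hJ hS).trans_eq (mul_comm _ _))

lemma abs_sum_mul_pow_succ_div_pow_le {ι : Type*} {s : Finset ι} {w y : ι → ℝ}
    (hw : ∀ i ∈ s, 0 ≤ w i) (hy : ∀ i ∈ s, 0 < y i) (x : ι → ℝ) (n : ℕ) :
    |∑ i ∈ s, w i * x i| ^ (n + 1) / (∑ i ∈ s, w i * y i) ^ n ≤
      ∑ i ∈ s, w i * (|x i| ^ (n + 1) / y i ^ n) := by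
  have hwy : ∀ i ∈ s, 0 ≤ w i * y i := fun i hi => mul_nonneg (hw i hi) (hy i hi).le
  have key := abs_sum_mul_pow_succ_le hwy (fun i => x i / y i) n
  have hx : ∑ i ∈ s, w i * y i * (x i / y i) = ∑ i ∈ s, w i * x i :=
    sum_congr rfl fun i hi => by field_simp [(hy i hi).ne']
  have hxy : ∑ i ∈ s, w i * y i * |x i / y i| ^ (n + 1) =
      ∑ i ∈ s, w i * (|x i| ^ (n + 1) / y i ^ n) := sum_congr rfl fun i hi => by
    rw [abs_div, abs_of_pos (hy i hi), div_pow, pow_succ (y i)]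
    field_simp [(hy i hi).ne']
  rw [hx, hxy] at key
  refine div_le_of_le_mul₀ (pow_nonneg (sum_nonneg hwy) _) (sum_nonneg fun i hi => ?_)
    (key.trans_eq (mul_comm _ _))
  have := hw i hi; have := hy i hi
  positivity

theorem lintegral_mixture_chi_le_general
    {Θ : Type*} [MeasurableSpace Θ] (μ : Measure Θ)
    {ι : Type*} (I : Finset ι) (w : ι → ℝ)
    (hw0 : ∀ i ∈ I, 0 ≤ w i)
    (p q r : ι → Θ → ℝ)
    (hpm : ∀ i ∈ I, Measurable (p i)) (hqm : ∀ i ∈ I, Measurable (q i))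
    (hrm : ∀ i ∈ I, Measurable (r i))
    (hrpos : ∀ i ∈ I, ∀ᵐ θ ∂μ, 0 < r i θ)
    (j : ℕ) (hj : 1 ≤ j) :
    ∫⁻ θ, ENNReal.ofReal
        (|∑ i ∈ I, w i * (p i θ - q i θ)| ^ j / (∑ i ∈ I, w i * r i θ) ^ (j - 1)) ∂μ ≤
      ∑ i ∈ I, ENNReal.ofReal (w i) *
        ∫⁻ θ, ENNReal.ofReal (|p i θ - q i θ| ^ j / r i θ ^ (j - 1)) ∂μ := by
  obtain ⟨n, rfl⟩ := Nat.exists_eq_add_of_le' hj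
  simp only [Nat.add_sub_cancel]
  have hrpos' : ∀ᵐ θ ∂μ, ∀ i ∈ I, 0 < r i θ := (Filter.eventually_all_finset I).2 hrpos
  calc _ ≤ ∫⁻ θ, ∑ i ∈ I, ENNReal.ofReal (w i) *
          ENNReal.ofReal (|p i θ - q i θ| ^ (n + 1) / r i θ ^ n) ∂μ := by
        refine lintegral_mono_ae (hrpos'.mono fun θ hθ => ?_)
        refine (ENNReal.ofReal_le_ofReal
          (abs_sum_mul_pow_succ_div_pow_le hw0 hθ _ n)).trans_eq ?_
        rw [ENNReal.ofReal_sum_of_nonneg fun i hi => by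
          have := hw0 i hi; have := hθ i hi; positivity]
        exact sum_congr rfl fun i hi => ENNReal.ofReal_mul (hw0 i hi)
    _ = _ := by
        rw [lintegral_finsetSum]
        · exact sum_congr rfl fun i _ => lintegral_const_mul' _ _ ofReal_ne_top
        · intro i hi
          have := hpm i hi; have := hqm i hi; have := hrm i hi
          fun_prop

/-- **Mixture inequality for the ternary Pearson–Vajda integrand (Jensen step of the
subsampling lemma)**: the divergence of a finite mixture with weights `w` is bounded by
the mixture of the divergences. -/
theorem lintegral_mixture_chi_le
    {Θ : Type*} [MeasurableSpace Θ] (μ : Measure Θ) [SigmaFinite μ]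
    {ι : Type*} (I : Finset ι) (w : ι → ℝ)
    (hw0 : ∀ i ∈ I, 0 ≤ w i) (hw1 : ∑ i ∈ I, w i = 1)
    (p q r : ι → Θ → ℝ)
    (hpm : ∀ i ∈ I, Measurable (p i)) (hqm : ∀ i ∈ I, Measurable (q i))
    (hrm : ∀ i ∈ I, Measurable (r i))
    (hpnn : ∀ i ∈ I, ∀ θ, 0 ≤ p i θ) (hqnn : ∀ i ∈ I, ∀ θ, 0 ≤ q i θ)
    (hrpos : ∀ i ∈ I, ∀ᵐ θ ∂μ, 0 < r i θ)
    (j : ℕ) (hj : 1 ≤ j) :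
    ∫⁻ θ, ENNReal.ofReal
        (|∑ i ∈ I, w i * (p i θ - q i θ)| ^ j / (∑ i ∈ I, w i * r i θ) ^ (j - 1)) ∂μ ≤
      ∑ i ∈ I, ENNReal.ofReal (w i) *
        ∫⁻ θ, ENNReal.ofReal (|p i θ - q i θ| ^ j / r i θ ^ (j - 1)) ∂μ :=
  lintegral_mixture_chi_le_general μ I w hw0 p q r hpm hqm hrm hrpos j hj
end

section
/- Let p, q, r be probability measures on a measurable space that are pairwise mutually absolutely continuous. Then for every integer α ≥ 1: D_{|χ|^α}(p, q ‖ r) ≤ D_{|χ|^α}(p‖r) + D_{|χ|^α}(p‖q) + D_{|χ|^α}(q‖r) + D_{|χ|^α}(q‖p). In particular, if a mechanism's binary Pearson–Vajda divergences of order α over neighboring inputs are bounded by ξ^α, then its ternary Pearson–Vajda divergences of order α over mutually adjacent triples are bounded by 4·ξ^α. -/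
open MeasureTheory ENNReal Real

/-- Binary Pearson–Vajda divergence `D_{|χ|^α}(p‖q) = ∫ |dp/dq − 1|^α dq`. -/
noncomputable def binaryChi {Θ : Type*} [MeasurableSpace Θ]
    (p q : Measure Θ) (α : ℕ) : ℝ≥0∞ :=
  ∫⁻ θ, (max (p.rnDeriv q θ - 1) (1 - p.rnDeriv q θ)) ^ α ∂q

/-- Ternary Pearson–Vajda divergence `D_{|χ|^α}(p,q‖r) = ∫ |dp/dr − dq/dr|^α dr`. -/
noncomputable def ternaryChi {Θ : Type*} [MeasurableSpace Θ]
    (p q r : Measure Θ) (α : ℕ) : ℝ≥0∞ :=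
  ∫⁻ θ, (max (p.rnDeriv r θ - q.rnDeriv r θ) (q.rnDeriv r θ - p.rnDeriv r θ)) ^ α ∂r

/-!
Write `a = dp/dr`, `b = dq/dr`, `c = dp/dq`, `d = dq/dp`, so that `a = c b` and `b = d a`
almost everywhere. Pointwise, `a - b ≤ |a - 1|` when `1 ≤ b`, while
`(a - b)^α = b^α (c - 1)^α ≤ b |c - 1|^α` when `b < 1`; symmetrically for `b - a`.
Integrating against `r`, the weight `b = dq/dr` turns `∫ b |c - 1|^α dr` into `D(p‖q)`, and
`a = dp/dr` turns `∫ a |d - 1|^α dr` into `D(q‖p)`.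
-/

namespace ENNReal

theorem pow_tsub_le_of_mul_eq (α : ℕ) {a b c : ℝ≥0∞} (hb : b ≠ ∞) (hcb : c * b = a) :
    (a - b) ^ α ≤ (max (a - 1) (1 - a)) ^ α + b * (max (c - 1) (1 - c)) ^ α := by
  rcases Nat.eq_zero_or_pos α with rfl | hα
  · simp
  rcases le_or_gt 1 b with h1b | hb1
  · have : (a - b) ^ α ≤ (max (a - 1) (1 - a)) ^ α :=
      pow_le_pow_left' ((tsub_le_tsub_left h1b a).trans (le_max_left _ _)) _
    exact this.trans le_self_add
  have hsub : a - b = (c - 1) * b := by rw [ENNReal.sub_mul fun _ _ => hb, hcb, one_mul]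
  calc (a - b) ^ α = b ^ α * (c - 1) ^ α := by rw [hsub, mul_pow, mul_comm]
    _ ≤ b * (max (c - 1) (1 - c)) ^ α :=
      mul_le_mul' (pow_le_of_le_one zero_le hb1.le hα.ne')
        (pow_le_pow_left' (le_max_left _ _) _)
    _ ≤ _ := le_add_self

theorem pow_max_tsub_le_of_mul_eq (α : ℕ) {a b c d : ℝ≥0∞} (ha : a ≠ ∞) (hb : b ≠ ∞)
    (hcb : c * b = a) (hda : d * a = b) :
    (max (a - b) (b - a)) ^ α ≤
      (max (a - 1) (1 - a)) ^ α + b * (max (c - 1) (1 - c)) ^ α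
        + (max (b - 1) (1 - b)) ^ α + a * (max (d - 1) (1 - d)) ^ α := by
  rcases le_total b a with hba | hab
  · rw [tsub_eq_zero_of_le hba, max_eq_left zero_le]
    exact (pow_tsub_le_of_mul_eq α hb hcb).trans (le_add_right le_self_add)
  · rw [tsub_eq_zero_of_le hab, max_eq_right zero_le]
    exact (pow_tsub_le_of_mul_eq α ha hda).trans (add_le_add_left le_add_self _)

end ENNReal

theorem binaryChi_eq_lintegral_rnDeriv_mul {Θ : Type*} [MeasurableSpace Θ]
    {p q r : Measure Θ} [q.HaveLebesgueDecomposition r] (hqr : q ≪ r) (α : ℕ) :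
    binaryChi p q α
      = ∫⁻ θ, q.rnDeriv r θ * (max (p.rnDeriv q θ - 1) (1 - p.rnDeriv q θ)) ^ α ∂r :=
  (lintegral_rnDeriv_mul hqr (by fun_prop)).symm

theorem ternaryChi_le_four_binaryChi_general
    {Θ : Type*} [MeasurableSpace Θ]
    (p q r : Measure Θ)
    [IsProbabilityMeasure p] [IsProbabilityMeasure q] [IsProbabilityMeasure r]
    (hpq : p ≪ q) (hqp : q ≪ p) (hpr : p ≪ r) (hqr : q ≪ r)
    (α : ℕ) :
    ternaryChi p q r α ≤
      binaryChi p r α + binaryChi p q α + binaryChi q r α + binaryChi q p α := by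
  set a := p.rnDeriv r
  set b := q.rnDeriv r
  set c := p.rnDeriv q
  set d := q.rnDeriv p
  calc ternaryChi p q r α
      ≤ ∫⁻ θ, ((max (a θ - 1) (1 - a θ)) ^ α + b θ * (max (c θ - 1) (1 - c θ)) ^ α
          + (max (b θ - 1) (1 - b θ)) ^ α + a θ * (max (d θ - 1) (1 - d θ)) ^ α) ∂r := by
        refine lintegral_mono_ae ?_
        filter_upwards [Measure.rnDeriv_mul_rnDeriv hpq (κ := r),
          Measure.rnDeriv_mul_rnDeriv hqp (κ := r),
          Measure.rnDeriv_ne_top p r, Measure.rnDeriv_ne_top q r] with θ hcb hda ha hb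
        exact ENNReal.pow_max_tsub_le_of_mul_eq α ha hb hcb hda
    _ = binaryChi p r α + binaryChi p q α + binaryChi q r α + binaryChi q p α := by
        rw [lintegral_add_right _ (by fun_prop), lintegral_add_right _ (by fun_prop),
          lintegral_add_right _ (by fun_prop), binaryChi_eq_lintegral_rnDeriv_mul hqr,
          binaryChi_eq_lintegral_rnDeriv_mul hpr]
        rfl

/-- **Ternary-to-binary conversion (Lemma 4)**: the ternary Pearson–Vajda divergence is
bounded by the sum of four binary Pearson–Vajda divergences. -/
theorem ternaryChi_le_four_binaryChi
    {Θ : Type*} [MeasurableSpace Θ]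
    (p q r : Measure Θ)
    [IsProbabilityMeasure p] [IsProbabilityMeasure q] [IsProbabilityMeasure r]
    (hpq : p ≪ q) (hqp : q ≪ p) (hpr : p ≪ r) (hrp : r ≪ p) (hqr : q ≪ r) (hrq : r ≪ q)
    (α : ℕ) (hα : 1 ≤ α) :
    ternaryChi p q r α ≤
      binaryChi p r α + binaryChi p q α + binaryChi q r α + binaryChi q p α :=
  ternaryChi_le_four_binaryChi_general p q r hpq hqp hpr hqr α
end

section
/- Let μ₁, μ₂ be real numbers, let v > 0, and let α > 1 be a real number. For the Gaussian measures p = N(μ₁, v) and q = N(μ₂, v) on ℝ (with mean μᵢ and variance v), one has ∫ (dp/dq)^α dq = exp( α(α−1)(μ₁−μ₂)² / (2v) ); equivalently, the Rényi divergence satisfies D_α(N(μ₁,v) ‖ N(μ₂,v)) = α(μ₁−μ₂)² / (2v). -/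
open MeasureTheory ProbabilityTheory ENNReal NNReal Real

/-! Writing both Gaussians as densities against Lebesgue measure, the integrand becomes
`p₂ (p₁ / p₂) ^ α`. Completing the square in the exponent, this equals
`exp (α (α - 1) (μ₁ - μ₂)² / 2v)` times the density of `N(α μ₁ + (1 - α) μ₂, v)`,
which integrates to one. -/

namespace MeasureTheory.Measure

variable {Ω : Type*} [MeasurableSpace Ω] {μ : Measure Ω} [SigmaFinite μ] {f g : Ω → ℝ≥0∞}

lemma rnDeriv_withDensity_withDensity_ae_eq (hf : Measurable f) (hg : Measurable g)
    (hg_ne_zero : ∀ x, g x ≠ 0) (hg_ne_top : ∀ x, g x ≠ ∞) :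
    (μ.withDensity f).rnDeriv (μ.withDensity g) =ᵐ[μ.withDensity g] f / g := by
  have : SigmaFinite (μ.withDensity g) := .withDensity_of_ne_top (ae_of_all _ hg_ne_top)
  refine (eq_rnDeriv (hf.div hg) MutuallySingular.zero_left ?_).symm
  rw [zero_add, ← withDensity_mul _ hg (hf.div hg)]
  refine withDensity_congr_ae (ae_of_all _ fun x ↦ ?_)
  exact (ENNReal.mul_div_cancel (hg_ne_zero x) (hg_ne_top x)).symm

lemma lintegral_rnDeriv_rpow_withDensity (hf : Measurable f) (hg : Measurable g)
    (hg_ne_zero : ∀ x, g x ≠ 0) (hg_ne_top : ∀ x, g x ≠ ∞) (a : ℝ) :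
    ∫⁻ x, (μ.withDensity f).rnDeriv (μ.withDensity g) x ^ a ∂(μ.withDensity g) =
      ∫⁻ x, g x * (f x / g x) ^ a ∂μ := by
  rw [lintegral_congr_ae ((rnDeriv_withDensity_withDensity_ae_eq hf hg hg_ne_zero
      hg_ne_top).mono fun x hx ↦ by rw [hx]),
    lintegral_withDensity_eq_lintegral_mul _ hg ((hf.div hg).pow_const a)]
  rfl

end MeasureTheory.Measure

namespace ProbabilityTheory

variable {v : ℝ≥0}

lemma gaussianPDFReal_mul_div_rpow (hv : v ≠ 0) (μ₁ μ₂ a x : ℝ) :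
    gaussianPDFReal μ₂ v x * (gaussianPDFReal μ₁ v x / gaussianPDFReal μ₂ v x) ^ a =
      exp (a * (a - 1) * (μ₁ - μ₂) ^ 2 / (2 * v)) *
        gaussianPDFReal (a * μ₁ + (1 - a) * μ₂) v x := by
  have hv' : (v : ℝ) ≠ 0 := NNReal.coe_ne_zero.mpr hv
  have hc : (√(2 * π * v))⁻¹ ≠ 0 := by positivity
  have exponent : -(x - μ₂) ^ 2 / (2 * v) + (-(x - μ₁) ^ 2 / (2 * v) - -(x - μ₂) ^ 2 / (2 * v)) * a
      = a * (a - 1) * (μ₁ - μ₂) ^ 2 / (2 * v) +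
        -(x - (a * μ₁ + (1 - a) * μ₂)) ^ 2 / (2 * v) := by
    field_simp; ring
  simp only [gaussianPDFReal]
  rw [mul_div_mul_left _ _ hc, ← exp_sub, ← exp_mul, mul_assoc, ← exp_add, exponent, exp_add]
  ring

lemma gaussianPDF_mul_div_rpow (hv : v ≠ 0) (μ₁ μ₂ a x : ℝ) :
    gaussianPDF μ₂ v x * (gaussianPDF μ₁ v x / gaussianPDF μ₂ v x) ^ a =
      ENNReal.ofReal (exp (a * (a - 1) * (μ₁ - μ₂) ^ 2 / (2 * v))) *
        gaussianPDF (a * μ₁ + (1 - a) * μ₂) v x := by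
  have h₁ := gaussianPDFReal_pos μ₁ v x hv
  have h₂ := gaussianPDFReal_pos μ₂ v x hv
  simp only [gaussianPDF]
  rw [← ENNReal.ofReal_div_of_pos h₂, ENNReal.ofReal_rpow_of_pos (div_pos h₁ h₂),
    ← ENNReal.ofReal_mul h₂.le, ← ENNReal.ofReal_mul (exp_pos _).le,
    gaussianPDFReal_mul_div_rpow hv]

lemma lintegral_rnDeriv_gaussianReal_rpow (hv : v ≠ 0) (μ₁ μ₂ a : ℝ) :
    ∫⁻ x, (gaussianReal μ₁ v).rnDeriv (gaussianReal μ₂ v) x ^ a ∂(gaussianReal μ₂ v) =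
      ENNReal.ofReal (exp (a * (a - 1) * (μ₁ - μ₂) ^ 2 / (2 * v))) := by
  simp only [gaussianReal_of_var_ne_zero _ hv]
  rw [Measure.lintegral_rnDeriv_rpow_withDensity (measurable_gaussianPDF _ _)
      (measurable_gaussianPDF _ _) (fun x ↦ (gaussianPDF_pos _ hv x).ne')
      (fun _ ↦ gaussianPDF_ne_top),
    lintegral_congr (gaussianPDF_mul_div_rpow hv μ₁ μ₂ a),
    lintegral_const_mul _ (measurable_gaussianPDF _ _), lintegral_gaussianPDF_eq_one _ hv,
    mul_one]

end ProbabilityTheory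

lemma renyiDiv_eq_of_lintegral_eq_ofReal_exp {Θ : Type*} [MeasurableSpace Θ] {p q : Measure Θ}
    {a c : ℝ} (h : ∫⁻ θ, p.rnDeriv q θ ^ a ∂q = ENNReal.ofReal (exp c)) :
    renyiDiv p q a = (((a - 1)⁻¹ * c : ℝ) : EReal) := by
  rw [renyiDiv, h, ENNReal.log_ofReal_of_pos (exp_pos _), Real.log_exp, EReal.coe_mul]

/-- **Rényi divergence between Gaussians of equal variance**:
`∫ (dN(μ₁,v)/dN(μ₂,v))^α dN(μ₂,v) = exp(α(α−1)(μ₁−μ₂)²/(2v))`; equivalently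
`D_α(N(μ₁,v) ‖ N(μ₂,v)) = α(μ₁−μ₂)²/(2v)`. -/
theorem renyiDiv_gaussianReal
    (μ₁ μ₂ : ℝ) (v : ℝ≥0) (hv : 0 < v) (α : ℝ) (hα : 1 < α) :
    (∫⁻ x, (gaussianReal μ₁ v).rnDeriv (gaussianReal μ₂ v) x ^ α ∂(gaussianReal μ₂ v) =
      ENNReal.ofReal (Real.exp (α * (α - 1) * (μ₁ - μ₂) ^ 2 / (2 * (v : ℝ))))) ∧
    renyiDiv (gaussianReal μ₁ v) (gaussianReal μ₂ v) α =
      ((α * (μ₁ - μ₂) ^ 2 / (2 * (v : ℝ)) : ℝ) : EReal) := by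
  have hlintegral := lintegral_rnDeriv_gaussianReal_rpow hv.ne' μ₁ μ₂ α
  refine ⟨hlintegral, ?_⟩
  rw [renyiDiv_eq_of_lintegral_eq_ofReal_exp hlintegral]
  have : α - 1 ≠ 0 := by linarith
  congr 1
  field_simp
end

section
/- Let α ≥ 2 be an even integer and let v > 0. Then the function μ ↦ ∫ ( dN(μ,v)/dN(0,v) − 1 )^α dN(0,v) is nondecreasing on [0,∞); equivalently, for 0 ≤ μ ≤ μ', Σ_{ℓ=0}^{α} (−1)^{α−ℓ}·C(α,ℓ)·exp( ℓ(ℓ−1)·μ²/(2v) ) ≤ Σ_{ℓ=0}^{α} (−1)^{α−ℓ}·C(α,ℓ)·exp( ℓ(ℓ−1)·μ'²/(2v) ). -/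
/-!
Under `N(0,v)` the likelihood ratio of `N(μ,v)` is `ρ(x) = exp(μx/v − μ²/(2v))`, and the
Gaussian moment generating function gives `∫ ρ^ℓ dN(0,v) = exp(ℓ(ℓ−1)μ²/(2v))`. Expanding
`(ρ − 1)^α` binomially turns the divergence into `Σ_ℓ (−1)^{α−ℓ} C(α,ℓ) exp(q_ℓ s)` with
`q_ℓ = ℓ(ℓ−1)` and `s = μ²/(2v)`. Expanding each exponential makes this a power series in `s`
whose `k`-th coefficient is the `α`-th forward difference at `0` of `ℓ ↦ q_ℓ^k = (2·C(ℓ,2))^k`.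
Binomial coefficients `ℓ ↦ C(ℓ,j)` have all iterated forward differences nonnegative, and the
discrete Leibniz rule shows that this property is stable under products; hence every coefficient
is nonnegative and the series is nondecreasing in `s ≥ 0`.
-/

open MeasureTheory ProbabilityTheory ENNReal NNReal Real Finset fwdDiff

def IsAbsolutelyMonotone {G : Type*} [AddCommGroup G] [PartialOrder G] (f : ℕ → G) : Prop :=
  ∀ n y, 0 ≤ Δ_[1] ^[n] f y

namespace IsAbsolutelyMonotone

variable {G : Type*} [AddCommGroup G] [PartialOrder G] {f : ℕ → G}

lemma nonneg (hf : IsAbsolutelyMonotone f) (y : ℕ) : 0 ≤ f y := hf 0 y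

lemma fwdDiff (hf : IsAbsolutelyMonotone f) : IsAbsolutelyMonotone (Δ_[1] f) :=
  fun n y => by simpa only [Function.iterate_succ_apply] using hf (n + 1) y

lemma of_fwdDiff (h₀ : ∀ y, 0 ≤ f y) (hΔ : IsAbsolutelyMonotone (Δ_[1] f)) :
    IsAbsolutelyMonotone f
  | 0, y => h₀ y
  | n + 1, y => by simpa only [Function.iterate_succ_apply] using hΔ n y

lemma const {c : G} (hc : 0 ≤ c) : IsAbsolutelyMonotone (fun _ : ℕ => c) :=
  of_fwdDiff (fun _ => hc) fun n y => by
    rw [fwdDiff_const, Function.iterate_fixed (fwdDiff_const 1 0) n]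

lemma mul {R : Type*} [CommRing R] [PartialOrder R] [IsOrderedRing R] {f g : ℕ → R}
    (hf : IsAbsolutelyMonotone f) (hg : IsAbsolutelyMonotone g) :
    IsAbsolutelyMonotone (f * g) := by
  intro n
  induction n generalizing f g with
  | zero => exact fun y => mul_nonneg (hf.nonneg y) (hg.nonneg y)
  | succ n ih =>
    intro y
    have hprod : Δ_[1] (f * g) = Δ_[1] f * g + f * Δ_[1] g + Δ_[1] f * Δ_[1] g :=
      fwdDiff_smul 1 f g
    rw [Function.iterate_succ_apply, hprod, fwdDiff_iter_add, fwdDiff_iter_add]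
    exact add_nonneg (add_nonneg (ih hf.fwdDiff hg y) (ih hf hg.fwdDiff y))
      (ih hf.fwdDiff hg.fwdDiff y)

lemma pow {R : Type*} [CommRing R] [PartialOrder R] [IsOrderedRing R] {f : ℕ → R}
    (hf : IsAbsolutelyMonotone f) (k : ℕ) : IsAbsolutelyMonotone (f ^ k) := by
  induction k with
  | zero => rw [pow_zero]; exact const (zero_le_one' R)
  | succ k ih => rw [pow_succ]; exact ih.mul hf

end IsAbsolutelyMonotone

lemma fwdDiff_natCast_choose {R : Type*} [CommRing R] (j : ℕ) :
    Δ_[1] (fun x : ℕ => (x.choose (j + 1) : R)) = fun x => (x.choose j : R) := by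
  ext x
  simp [fwdDiff, Nat.choose_succ_succ']

lemma isAbsolutelyMonotone_natCast_choose {R : Type*} [CommRing R] [PartialOrder R]
    [IsOrderedRing R] (j : ℕ) : IsAbsolutelyMonotone (fun x : ℕ => (x.choose j : R)) := by
  induction j with
  | zero => simpa using IsAbsolutelyMonotone.const (zero_le_one' R)
  | succ j ih =>
    exact .of_fwdDiff (fun _ => Nat.cast_nonneg _) (by rwa [fwdDiff_natCast_choose])

lemma fwdDiff_iter_eq_sum_mul {R : Type*} [CommRing R] (f : ℕ → R) (n y : ℕ) :
    Δ_[1] ^[n] f y = ∑ k ∈ range (n + 1), (-1) ^ (n - k) * (n.choose k : R) * f (y + k) := by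
  simp [fwdDiff_iter_eq_sum_shift, zsmul_eq_mul]

open Nat in
lemma monotoneOn_sum_mul_exp_mul {ι : Type*} (t : Finset ι) (c x : ι → ℝ)
    (hc : ∀ k : ℕ, 0 ≤ ∑ i ∈ t, c i * x i ^ k) :
    MonotoneOn (fun s => ∑ i ∈ t, c i * rexp (x i * s)) (Set.Ici 0) := by
  have hasSum (s : ℝ) : HasSum (fun k : ℕ => (∑ i ∈ t, c i * x i ^ k) * (s ^ k / k !))
      (∑ i ∈ t, c i * rexp (x i * s)) := by
    have := hasSum_sum (s := t) fun i _ =>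
      (NormedSpace.expSeries_div_hasSum_exp (x i * s)).mul_left (c i)
    simpa only [Finset.sum_mul, mul_pow, ← Real.exp_eq_exp_ℝ, mul_assoc, mul_div_assoc] using this
  intro s hs s' hs' hss'
  exact hasSum_le (fun k => mul_le_mul_of_nonneg_left (by gcongr) (hc k))
    (hasSum s) (hasSum s')

lemma monotoneOn_sum_alternating_choose_exp (α : ℕ) :
    MonotoneOn (fun s => ∑ ℓ ∈ range (α + 1), (-1 : ℝ) ^ (α - ℓ) * (α.choose ℓ : ℝ) *
      rexp ((ℓ : ℝ) * ((ℓ : ℝ) - 1) * s)) (Set.Ici 0) := by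
  have hq (ℓ : ℕ) : (ℓ : ℝ) * ((ℓ : ℝ) - 1) = 2 * (ℓ.choose 2 : ℝ) := by
    rw [Nat.cast_choose_two]
    ring
  refine monotoneOn_sum_mul_exp_mul _ _ _ fun k => ?_
  have hqk : IsAbsolutelyMonotone (fun ℓ : ℕ => ((ℓ : ℝ) * ((ℓ : ℝ) - 1)) ^ k) := by
    simp only [hq]
    exact ((IsAbsolutelyMonotone.const zero_le_two).mul
      (isAbsolutelyMonotone_natCast_choose 2)).pow k
  simpa [fwdDiff_iter_eq_sum_mul] using hqk α 0

lemma sub_one_pow_eq_sum {R : Type*} [CommRing R] (y : R) (n : ℕ) :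
    (y - 1) ^ n = ∑ ℓ ∈ range (n + 1), (-1) ^ (n - ℓ) * (n.choose ℓ : R) * y ^ ℓ := by
  rw [sub_eq_add_neg, add_pow]
  exact sum_congr rfl fun ℓ _ => by ring

lemma ENNReal.max_ofReal_sub_one_one_sub_ofReal {a : ℝ} (ha : 0 ≤ a) :
    max (ENNReal.ofReal a - 1) (1 - ENNReal.ofReal a) = ENNReal.ofReal |a - 1| := by
  rw [← ENNReal.ofReal_one, ← ENNReal.ofReal_sub _ zero_le_one, ← ENNReal.ofReal_sub _ ha,
    ← ENNReal.ofReal_max, abs_eq_max_neg, neg_sub]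

lemma sum_alternating_choose_exp_sq_div_le (α : ℕ) (v : ℝ≥0) {μ μ' : ℝ} (hμ : 0 ≤ μ)
    (hμμ' : μ ≤ μ') :
    ∑ ℓ ∈ range (α + 1), (-1 : ℝ) ^ (α - ℓ) * (α.choose ℓ : ℝ) *
        rexp (ℓ * (ℓ - 1) * μ ^ 2 / (2 * v)) ≤
      ∑ ℓ ∈ range (α + 1), (-1 : ℝ) ^ (α - ℓ) * (α.choose ℓ : ℝ) *
        rexp (ℓ * (ℓ - 1) * μ' ^ 2 / (2 * v)) := by
  have hs : μ ^ 2 / (2 * v) ≤ μ' ^ 2 / (2 * v) := by gcongr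
  simpa only [mul_div_assoc] using monotoneOn_sum_alternating_choose_exp α
    (Set.mem_Ici.2 (by positivity)) (Set.mem_Ici.2 (by positivity)) hs

noncomputable def gaussianLikelihoodRatio (v : ℝ≥0) (μ x : ℝ) : ℝ :=
  rexp (μ / v * x - μ ^ 2 / (2 * v))

section GaussianLikelihoodRatio

variable {v : ℝ≥0}

lemma gaussianLikelihoodRatio_pos (μ x : ℝ) : 0 < gaussianLikelihoodRatio v μ x := exp_pos _

lemma gaussianPDFReal_eq_mul_gaussianLikelihoodRatio (hv : v ≠ 0) (μ x : ℝ) :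
    gaussianPDFReal μ v x = gaussianPDFReal 0 v x * gaussianLikelihoodRatio v μ x := by
  have : (v : ℝ) ≠ 0 := mod_cast hv
  rw [gaussianPDFReal, gaussianPDFReal, gaussianLikelihoodRatio, mul_assoc _ (rexp _),
    ← Real.exp_add]
  congr 2
  field_simp
  ring

lemma gaussianReal_eq_withDensity_gaussianLikelihoodRatio (hv : v ≠ 0) (μ : ℝ) :
    gaussianReal μ v =
      (gaussianReal 0 v).withDensity fun x => ENNReal.ofReal (gaussianLikelihoodRatio v μ x) := by
  rw [gaussianReal_of_var_ne_zero μ hv, gaussianReal_of_var_ne_zero 0 hv,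
    ← withDensity_mul _ (measurable_gaussianPDF 0 v) (by unfold gaussianLikelihoodRatio; fun_prop)]
  congr 1 with x
  rw [Pi.mul_apply, gaussianPDF, gaussianPDF, ← ENNReal.ofReal_mul (gaussianPDFReal_nonneg 0 v x),
    ← gaussianPDFReal_eq_mul_gaussianLikelihoodRatio hv]

lemma rnDeriv_gaussianReal_gaussianReal_zero (hv : v ≠ 0) (μ : ℝ) :
    (gaussianReal μ v).rnDeriv (gaussianReal 0 v)
      =ᵐ[gaussianReal 0 v] fun x => ENNReal.ofReal (gaussianLikelihoodRatio v μ x) := by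
  rw [gaussianReal_eq_withDensity_gaussianLikelihoodRatio hv μ]
  exact Measure.rnDeriv_withDensity _ (by unfold gaussianLikelihoodRatio; fun_prop)

lemma gaussianLikelihoodRatio_pow (μ x : ℝ) (ℓ : ℕ) :
    gaussianLikelihoodRatio v μ x ^ ℓ = rexp (-(ℓ * μ ^ 2 / (2 * v))) * rexp (ℓ * μ / v * x) := by
  rw [gaussianLikelihoodRatio, ← Real.exp_nat_mul, ← Real.exp_add]
  ring_nf

lemma integrable_gaussianLikelihoodRatio_pow (μ : ℝ) (ℓ : ℕ) :
    Integrable (fun x => gaussianLikelihoodRatio v μ x ^ ℓ) (gaussianReal 0 v) := by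
  simp_rw [gaussianLikelihoodRatio_pow]
  exact (integrable_exp_mul_gaussianReal _).const_mul _

lemma integral_gaussianLikelihoodRatio_pow (hv : v ≠ 0) (μ : ℝ) (ℓ : ℕ) :
    ∫ x, gaussianLikelihoodRatio v μ x ^ ℓ ∂gaussianReal 0 v
      = rexp (ℓ * (ℓ - 1) * μ ^ 2 / (2 * v)) := by
  have : (v : ℝ) ≠ 0 := mod_cast hv
  have hmgf := congrFun (mgf_fun_id_gaussianReal (μ := 0) (v := v)) (ℓ * μ / v)
  rw [mgf] at hmgf
  simp_rw [gaussianLikelihoodRatio_pow, integral_const_mul, hmgf, ← Real.exp_add]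
  congr 1
  field_simp
  ring

lemma integral_gaussianLikelihoodRatio_sub_one_pow (hv : v ≠ 0) (μ : ℝ) (α : ℕ) :
    ∫ x, (gaussianLikelihoodRatio v μ x - 1) ^ α ∂gaussianReal 0 v
      = ∑ ℓ ∈ range (α + 1), (-1 : ℝ) ^ (α - ℓ) * (α.choose ℓ : ℝ) *
          rexp (ℓ * (ℓ - 1) * μ ^ 2 / (2 * v)) := by
  simp_rw [sub_one_pow_eq_sum]
  rw [integral_finsetSum _ fun ℓ _ => (integrable_gaussianLikelihoodRatio_pow μ ℓ).const_mul _]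
  simp_rw [integral_const_mul, integral_gaussianLikelihoodRatio_pow hv]

lemma integrable_gaussianLikelihoodRatio_sub_one_pow (μ : ℝ) (α : ℕ) :
    Integrable (fun x => (gaussianLikelihoodRatio v μ x - 1) ^ α) (gaussianReal 0 v) := by
  simp_rw [sub_one_pow_eq_sum]
  exact integrable_finsetSum _ fun ℓ _ => (integrable_gaussianLikelihoodRatio_pow μ ℓ).const_mul _

lemma lintegral_max_rnDeriv_sub_one_pow_of_even (hv : v ≠ 0) (μ : ℝ) {α : ℕ} (hα : Even α) :
    ∫⁻ x, (max ((gaussianReal μ v).rnDeriv (gaussianReal 0 v) x - 1)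
        (1 - (gaussianReal μ v).rnDeriv (gaussianReal 0 v) x)) ^ α ∂gaussianReal 0 v
      = ENNReal.ofReal (∑ ℓ ∈ range (α + 1), (-1 : ℝ) ^ (α - ℓ) * (α.choose ℓ : ℝ) *
          rexp (ℓ * (ℓ - 1) * μ ^ 2 / (2 * v))) := by
  rw [← integral_gaussianLikelihoodRatio_sub_one_pow hv,
    ofReal_integral_eq_lintegral_ofReal (integrable_gaussianLikelihoodRatio_sub_one_pow μ α)
      (ae_of_all _ fun x => hα.pow_nonneg _)]
  refine lintegral_congr_ae ?_
  filter_upwards [rnDeriv_gaussianReal_gaussianReal_zero hv μ] with x hx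
  rw [hx, ENNReal.max_ofReal_sub_one_one_sub_ofReal (gaussianLikelihoodRatio_pos μ x).le,
    ← hα.pow_abs, ENNReal.ofReal_pow (abs_nonneg _)]

end GaussianLikelihoodRatio

theorem gaussian_chi_monotone_general
    (α : ℕ) (heven : Even α) (v : ℝ≥0) (hv : 0 < v) :
    MonotoneOn (fun μ : ℝ =>
      ∫⁻ x, (max ((gaussianReal μ v).rnDeriv (gaussianReal 0 v) x - 1)
          (1 - (gaussianReal μ v).rnDeriv (gaussianReal 0 v) x)) ^ α
        ∂(gaussianReal 0 v)) (Set.Ici 0) ∧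
    ∀ μ μ' : ℝ, 0 ≤ μ → μ ≤ μ' →
      ∑ ℓ ∈ Finset.range (α + 1), (-1 : ℝ) ^ (α - ℓ) * (α.choose ℓ : ℝ) *
          Real.exp ((ℓ : ℝ) * ((ℓ : ℝ) - 1) * μ ^ 2 / (2 * (v : ℝ))) ≤
        ∑ ℓ ∈ Finset.range (α + 1), (-1 : ℝ) ^ (α - ℓ) * (α.choose ℓ : ℝ) *
          Real.exp ((ℓ : ℝ) * ((ℓ : ℝ) - 1) * μ' ^ 2 / (2 * (v : ℝ))) := by
  refine ⟨fun μ hμ μ' _ hμμ' => ?_, fun μ μ' hμ hμμ' =>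
    sum_alternating_choose_exp_sq_div_le α v hμ hμμ'⟩
  simp only [lintegral_max_rnDeriv_sub_one_pow_of_even hv.ne' _ heven]
  exact ENNReal.ofReal_le_ofReal (sum_alternating_choose_exp_sq_div_le α v hμ hμμ')

/-- **Monotonicity of the even-order Pearson–Vajda divergence for Gaussians (appears in
Lemma 8, self-consistency of the Gaussian mechanism)**: for even `α ≥ 2` the map
`μ ↦ ∫ (dN(μ,v)/dN(0,v) − 1)^α dN(0,v)` is nondecreasing on `[0,∞)`; equivalently the
alternating binomial sums `Σ_ℓ (−1)^{α−ℓ} C(α,ℓ) e^{ℓ(ℓ−1)μ²/(2v)}` are nondecreasing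
in `μ ≥ 0`. -/
theorem gaussian_chi_monotone
    (α : ℕ) (hα : 2 ≤ α) (heven : Even α) (v : ℝ≥0) (hv : 0 < v) :
    MonotoneOn (fun μ : ℝ =>
      ∫⁻ x, (max ((gaussianReal μ v).rnDeriv (gaussianReal 0 v) x - 1)
          (1 - (gaussianReal μ v).rnDeriv (gaussianReal 0 v) x)) ^ α
        ∂(gaussianReal 0 v)) (Set.Ici 0) ∧
    ∀ μ μ' : ℝ, 0 ≤ μ → μ ≤ μ' →
      ∑ ℓ ∈ Finset.range (α + 1), (-1 : ℝ) ^ (α - ℓ) * (α.choose ℓ : ℝ) *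
          Real.exp ((ℓ : ℝ) * ((ℓ : ℝ) - 1) * μ ^ 2 / (2 * (v : ℝ))) ≤
        ∑ ℓ ∈ Finset.range (α + 1), (-1 : ℝ) ^ (α - ℓ) * (α.choose ℓ : ℝ) *
          Real.exp ((ℓ : ℝ) * ((ℓ : ℝ) - 1) * μ' ^ 2 / (2 * (v : ℝ))) :=
  gaussian_chi_monotone_general α heven v hv
end

section
/- Let E be a real normed vector space, A : E → ℝ a function, η₁, η₂ ∈ E, and Δ, κ, L > 0 with ‖η₁ − η₂‖ ≤ Δ ≤ κ. Suppose there is a continuous linear functional g : E → ℝ such that for every η ∈ E with ‖η − η₁‖ ≤ κ one has A(η) ≤ A(η₁) + g(η − η₁) + (L/2)·‖η − η₁‖². Then for every real α with 1 < α ≤ κ/Δ + 1: (1/(α−1)) · ( A(α·η₁ + (1−α)·η₂) − α·A(η₁) − (1−α)·A(η₂) ) ≤ α·L·Δ²/2. -/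
/-! Write `η₁ + t • (η₁ - η₂)` for the two points at which `A` is evaluated: `t = α - 1` gives
`α • η₁ + (1 - α) • η₂` and `t = -1` gives `η₂`. Adding the quadratic upper bound at the first
point to `α - 1` times the bound at the second, the linear terms `g (η₁ - η₂)` cancel and only
`(L / 2) ‖η₁ - η₂‖² ((α - 1)² + (α - 1))` survives. -/

theorem sub_combination_le_of_quadratic_upper_bound
    {E : Type*} [NormedAddCommGroup E] [NormedSpace ℝ E]
    (A : E → ℝ) (η₁ η₂ : E) (κ L : ℝ) (g : E →L[ℝ] ℝ)
    (hSmooth : ∀ η : E, ‖η - η₁‖ ≤ κ →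
      A η ≤ A η₁ + g (η - η₁) + L / 2 * ‖η - η₁‖ ^ 2)
    (α : ℝ) (hα : 1 ≤ α) (hfar : (α - 1) * ‖η₁ - η₂‖ ≤ κ) (hnear : ‖η₁ - η₂‖ ≤ κ) :
    A (α • η₁ + (1 - α) • η₂) - α * A η₁ - (1 - α) * A η₂ ≤
      (α - 1) * (α * L * ‖η₁ - η₂‖ ^ 2 / 2) := by
  have hα₀ : 0 ≤ α - 1 := sub_nonneg.2 hα
  have hfar_eq : α • η₁ + (1 - α) • η₂ - η₁ = (α - 1) • (η₁ - η₂) := by module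
  have hnear_eq : η₂ - η₁ = -(η₁ - η₂) := (neg_sub η₁ η₂).symm
  have hfar_norm : ‖α • η₁ + (1 - α) • η₂ - η₁‖ = (α - 1) * ‖η₁ - η₂‖ := by
    rw [hfar_eq, norm_smul, Real.norm_of_nonneg hα₀]
  have h_far := hSmooth _ (hfar_norm ▸ hfar)
  have h_near := hSmooth η₂ (by rwa [hnear_eq, norm_neg])
  rw [hfar_norm, hfar_eq, map_smul, smul_eq_mul] at h_far
  rw [hnear_eq, norm_neg, map_neg] at h_near
  nlinarith [mul_le_mul_of_nonneg_left h_near hα₀]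

theorem expFamily_renyi_le_of_smooth_general
    {E : Type*} [NormedAddCommGroup E] [NormedSpace ℝ E]
    (A : E → ℝ) (η₁ η₂ : E) (Δ κ L : ℝ)
    (hΔ : 0 < Δ) (hL : 0 < L)
    (hdist : ‖η₁ - η₂‖ ≤ Δ) (hΔκ : Δ ≤ κ)
    (g : E →L[ℝ] ℝ)
    (hSmooth : ∀ η : E, ‖η - η₁‖ ≤ κ →
      A η ≤ A η₁ + g (η - η₁) + L / 2 * ‖η - η₁‖ ^ 2)
    (α : ℝ) (hα : 1 < α) (hακ : α ≤ κ / Δ + 1) :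
    (α - 1)⁻¹ * (A (α • η₁ + (1 - α) • η₂) - α * A η₁ - (1 - α) * A η₂) ≤
      α * L * Δ ^ 2 / 2 := by
  have hα₀ : 0 < α - 1 := sub_pos.2 hα
  have hfar : (α - 1) * ‖η₁ - η₂‖ ≤ κ :=
    calc (α - 1) * ‖η₁ - η₂‖ ≤ (α - 1) * Δ := by gcongr
      _ ≤ κ := (le_div_iff₀ hΔ).1 (by linarith)
  rw [inv_mul_le_iff₀ hα₀]
  calc _ ≤ (α - 1) * (α * L * ‖η₁ - η₂‖ ^ 2 / 2) :=
        sub_combination_le_of_quadratic_upper_bound A η₁ η₂ κ L g hSmooth α hα.le hfar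
          (hdist.trans hΔκ)
    _ ≤ (α - 1) * (α * L * Δ ^ 2 / 2) := by gcongr

/-- **RDP of exponential family mechanisms via local smoothness (Proposition 5,
smoothness part)**: if the log-partition function `A` satisfies a local quadratic upper
bound with constant `L` within radius `κ` around `η₁` (with linear part a continuous
linear functional `g`), and `‖η₁ − η₂‖ ≤ Δ ≤ κ`, then for all `1 < α ≤ κ/Δ + 1` the
Rényi-divergence expression is bounded by `αLΔ²/2`. -/
theorem expFamily_renyi_le_of_smooth
    {E : Type*} [NormedAddCommGroup E] [NormedSpace ℝ E]
    (A : E → ℝ) (η₁ η₂ : E) (Δ κ L : ℝ)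
    (hΔ : 0 < Δ) (hκ : 0 < κ) (hL : 0 < L)
    (hdist : ‖η₁ - η₂‖ ≤ Δ) (hΔκ : Δ ≤ κ)
    (g : E →L[ℝ] ℝ)
    (hSmooth : ∀ η : E, ‖η - η₁‖ ≤ κ →
      A η ≤ A η₁ + g (η - η₁) + L / 2 * ‖η - η₁‖ ^ 2)
    (α : ℝ) (hα : 1 < α) (hακ : α ≤ κ / Δ + 1) :
    (α - 1)⁻¹ * (A (α • η₁ + (1 - α) • η₂) - α * A η₁ - (1 - α) * A η₂) ≤
      α * L * Δ ^ 2 / 2 :=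
  expFamily_renyi_le_of_smooth_general A η₁ η₂ Δ κ L hΔ hL hdist hΔκ g hSmooth α hα hακ
end

section
/- Let p, q, r be probability measures on a measurable space with p and q absolutely continuous with respect to r, and let j ≥ 2 be an integer. (i) ∫ |dp/dr − dq/dr|^j dr ≤ exp((j−1)·D_j(p‖r)) + exp((j−1)·D_j(q‖r)). (ii) If, moreover, e^{−ε}·(dq/dr) ≤ dp/dr ≤ e^{ε}·(dq/dr) holds r-almost everywhere for some ε ≥ 0, then ∫ |dp/dr − dq/dr|^j dr ≤ (e^{ε} − 1)^j · exp((j−1)·D_j(q‖r)). -/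
/-!
Both bounds hold pointwise before integrating against `r`. With `a = dp/dr` and `b = dq/dr`,
`|a - b| ≤ max a b`, so `|a - b|^j ≤ a^j + b^j`; under the ratio bound `e^{-ε} ≤ a / b ≤ e^ε`,
`|a - b| ≤ (e^ε - 1) b` because `1 - e^{-ε} ≤ e^ε - 1`. Finally `(j - 1) D_j(p‖r)` is defined
so that its exponential is exactly `∫ (dp/dr)^j dr`.
-/

open MeasureTheory ENNReal Real

lemma exp_mul_renyiDiv_s19 {Θ : Type*} [MeasurableSpace Θ] (p r : Measure Θ) {α : ℝ} (hα : α ≠ 1) :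
    EReal.exp (((α - 1 : ℝ) : EReal) * renyiDiv p r α) = ∫⁻ θ, p.rnDeriv r θ ^ α ∂r := by
  rw [renyiDiv, ← mul_assoc, ← EReal.coe_mul, mul_inv_cancel₀ (sub_ne_zero.mpr hα),
    EReal.coe_one, one_mul, ENNReal.exp_log]

namespace ENNReal

lemma max_tsub_pow_le_pow_add_pow (a b : ℝ≥0∞) (n : ℕ) :
    max (a - b) (b - a) ^ n ≤ a ^ n + b ^ n :=
  calc max (a - b) (b - a) ^ n ≤ max a b ^ n := by gcongr <;> exact tsub_le_self
    _ = max (a ^ n) (b ^ n) := (pow_left_mono n).map_max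
    _ ≤ a ^ n + b ^ n := max_le le_self_add le_add_self

lemma max_tsub_le_of_exp_neg_mul_le_of_le_exp_mul {a b : ℝ≥0∞} {ε : ℝ} (hε : 0 ≤ ε)
    (hba : ENNReal.ofReal (Real.exp (-ε)) * b ≤ a) (hab : a ≤ ENNReal.ofReal (Real.exp ε) * b) :
    max (a - b) (b - a) ≤ ENNReal.ofReal (Real.exp ε - 1) * b := by
  have hexp : ENNReal.ofReal (Real.exp ε - 1) + 1 = ENNReal.ofReal (Real.exp ε) := by
    rw [← ENNReal.ofReal_one, ← ENNReal.ofReal_add (by linarith [Real.one_le_exp hε]) zero_le_one,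
      sub_add_cancel]
  -- `2 ≤ e^ε + e^{-ε}`, from `1 + x ≤ e^x` at `x = ±ε`
  have hsum : 1 ≤ ENNReal.ofReal (Real.exp ε - 1) + ENNReal.ofReal (Real.exp (-ε)) := by
    rw [← ENNReal.ofReal_add (by linarith [Real.one_le_exp hε]) (Real.exp_pos _).le,
      ENNReal.one_le_ofReal]
    linarith [Real.add_one_le_exp ε, Real.add_one_le_exp (-ε)]
  refine max_le (tsub_le_iff_right.mpr ?_) (tsub_le_iff_right.mpr ?_)
  · calc a ≤ ENNReal.ofReal (Real.exp ε) * b := hab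
      _ = ENNReal.ofReal (Real.exp ε - 1) * b + b := by rw [← hexp, add_mul, one_mul]
  · calc b = 1 * b := (one_mul b).symm
      _ ≤ (ENNReal.ofReal (Real.exp ε - 1) + ENNReal.ofReal (Real.exp (-ε))) * b := by gcongr
      _ ≤ ENNReal.ofReal (Real.exp ε - 1) * b + a := by rw [add_mul]; gcongr

end ENNReal

theorem ternaryChi_le_renyi_bounds_general
    {Θ : Type*} [MeasurableSpace Θ]
    (p q r : Measure Θ)
    (j : ℕ) (hj : 2 ≤ j) :
    (∫⁻ θ, (max (p.rnDeriv r θ - q.rnDeriv r θ) (q.rnDeriv r θ - p.rnDeriv r θ)) ^ j ∂r ≤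
      EReal.exp (((((j : ℝ) - 1) : ℝ) : EReal) * renyiDiv p r (j : ℝ)) +
        EReal.exp (((((j : ℝ) - 1) : ℝ) : EReal) * renyiDiv q r (j : ℝ))) ∧
    (∀ ε : ℝ, 0 ≤ ε →
      (∀ᵐ θ ∂r, ENNReal.ofReal (Real.exp (-ε)) * q.rnDeriv r θ ≤ p.rnDeriv r θ ∧
        p.rnDeriv r θ ≤ ENNReal.ofReal (Real.exp ε) * q.rnDeriv r θ) →
      ∫⁻ θ, (max (p.rnDeriv r θ - q.rnDeriv r θ)
          (q.rnDeriv r θ - p.rnDeriv r θ)) ^ j ∂r ≤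
        ENNReal.ofReal ((Real.exp ε - 1) ^ j) *
          EReal.exp (((((j : ℝ) - 1) : ℝ) : EReal) * renyiDiv q r (j : ℝ))) := by
  have hj1 : (j : ℝ) ≠ 1 := by
    have : (2 : ℝ) ≤ j := by exact_mod_cast hj
    linarith
  simp only [exp_mul_renyiDiv_s19 _ _ hj1, ENNReal.rpow_natCast]
  refine ⟨?_, fun ε hε hae => ?_⟩
  · calc _ ≤ ∫⁻ θ, p.rnDeriv r θ ^ j + q.rnDeriv r θ ^ j ∂r :=
          lintegral_mono fun θ => ENNReal.max_tsub_pow_le_pow_add_pow _ _ j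
      _ = _ := lintegral_add_left ((p.measurable_rnDeriv r).pow_const j) _
  · calc _ ≤ ∫⁻ θ, ENNReal.ofReal ((Real.exp ε - 1) ^ j) * q.rnDeriv r θ ^ j ∂r := by
          refine lintegral_mono_ae (hae.mono fun θ hθ => ?_)
          rw [ENNReal.ofReal_pow (by linarith [Real.one_le_exp hε]), ← mul_pow]
          exact pow_le_pow_left'
            (ENNReal.max_tsub_le_of_exp_neg_mul_le_of_le_exp_mul hε hθ.1 hθ.2) j
      _ = _ := lintegral_const_mul' _ _ ENNReal.ofReal_ne_top

/-- **Bounding the ternary Pearson–Vajda divergence by Rényi divergences**: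
(i) `∫ |dp/dr − dq/dr|^j dr ≤ e^{(j−1)D_j(p‖r)} + e^{(j−1)D_j(q‖r)}`, and
(ii) under the multiplicative bound `e^{−ε}·dq/dr ≤ dp/dr ≤ e^{ε}·dq/dr` (r-a.e.),
`∫ |dp/dr − dq/dr|^j dr ≤ (e^{ε}−1)^j · e^{(j−1)D_j(q‖r)}`. -/
theorem ternaryChi_le_renyi_bounds
    {Θ : Type*} [MeasurableSpace Θ]
    (p q r : Measure Θ)
    [IsProbabilityMeasure p] [IsProbabilityMeasure q] [IsProbabilityMeasure r]
    (hpr : p ≪ r) (hqr : q ≪ r)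
    (j : ℕ) (hj : 2 ≤ j) :
    (∫⁻ θ, (max (p.rnDeriv r θ - q.rnDeriv r θ) (q.rnDeriv r θ - p.rnDeriv r θ)) ^ j ∂r ≤
      EReal.exp (((((j : ℝ) - 1) : ℝ) : EReal) * renyiDiv p r (j : ℝ)) +
        EReal.exp (((((j : ℝ) - 1) : ℝ) : EReal) * renyiDiv q r (j : ℝ))) ∧
    (∀ ε : ℝ, 0 ≤ ε →
      (∀ᵐ θ ∂r, ENNReal.ofReal (Real.exp (-ε)) * q.rnDeriv r θ ≤ p.rnDeriv r θ ∧
        p.rnDeriv r θ ≤ ENNReal.ofReal (Real.exp ε) * q.rnDeriv r θ) →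
      ∫⁻ θ, (max (p.rnDeriv r θ - q.rnDeriv r θ)
          (q.rnDeriv r θ - p.rnDeriv r θ)) ^ j ∂r ≤
        ENNReal.ofReal ((Real.exp ε - 1) ^ j) *
          EReal.exp (((((j : ℝ) - 1) : ℝ) : EReal) * renyiDiv q r (j : ℝ))) :=
  ternaryChi_le_renyi_bounds_general p q r j hj
end
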